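/- arXiv:1408.0553 — 3 statements merged into one kernel-verified Lean document; each statement's English description precedes it below -/
import Mathlib

section
/- Let h ∈ ℝ^k be a random vector whose moments satisfy: E[h_i² h_j²] ≤ τ for all i ≠ j, and E[h_i³ h_j] = 0 for i ≠ j, and E[h_i h_j h_l h_m] = 0 whenever the multi-index (i,j,l,m) has a coordinate appearing exactly once. Let A = [a₁,…,a_k] ∈ ℝ^{d×k}, x = Ah, and define the residual tensor Ψ = E[x^{⊗4}] − Σ_{i∈[k]} E[h_i⁴] a_i^{⊗4}. Then the tensor spectral norm satisfies ‖Ψ‖ ≤ 3 τ ‖A‖⁴. -/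
/-!
With `p = Aᵀu`, `q = Aᵀv`, `r = Aᵀw`, `s = Aᵀz`, the contraction `Ψ(u, v, w, z)` is the
contraction of the moment tensor `M_{abce} = E[h_a h_b h_c h_e]` of `h` against `p, q, r, s`,
minus its diagonal part. Since `M` vanishes as soon as one index occurs exactly once, what is
left are the three pairings `(x x y y)`, `(x y x y)`, `(x y y x)` with `x ≠ y`, each with
coefficient `E[h_x² h_y²] ≤ τ`. Each pairing contributes at most
`τ (∑ |p_x q_x|) (∑ |r_y s_y|) ≤ τ ‖p‖ ‖q‖ ‖r‖ ‖s‖ ≤ τ ‖A‖⁴`.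
-/

open MeasureTheory

/-- Spectral norm of a (possibly rectangular) real matrix, as the operator norm of the
associated linear map between Euclidean spaces. -/
noncomputable def specNorm (d k : ℕ) (A : Matrix (Fin d) (Fin k) ℝ) : ℝ :=
  ‖LinearMap.toContinuousLinearMap (Matrix.toEuclideanLin A)‖

open Finset Matrix

section Contraction

variable {ι : Type*} [Fintype ι]

def contract4 (T : ι → ι → ι → ι → ℝ) (u v w z : ι → ℝ) : ℝ :=
  ∑ a, ∑ b, ∑ c, ∑ e, T a b c e * u a * v b * w c * z e

theorem contract4_sub (S T : ι → ι → ι → ι → ℝ) (u v w z : ι → ℝ) :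
    contract4 (fun a b c e => S a b c e - T a b c e) u v w z
      = contract4 S u v w z - contract4 T u v w z := by
  simp only [contract4, sub_mul, sum_sub_distrib]

theorem contract4_rankOne (x u v w z : ι → ℝ) :
    contract4 (fun a b c e => x a * x b * x c * x e) u v w z
      = (x ⬝ᵥ u) * (x ⬝ᵥ v) * (x ⬝ᵥ w) * (x ⬝ᵥ z) := by
  have regroup : ∀ a b c e, x a * x b * x c * x e * u a * v b * w c * z e
      = x a * u a * (x b * v b) * (x c * w c) * (x e * z e) := fun _ _ _ _ => by ring
  simp only [contract4, dotProduct, regroup, ← mul_sum, ← sum_mul]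

theorem contract4_sum {κ : Type*} [Fintype κ] (T : κ → ι → ι → ι → ι → ℝ)
    (u v w z : ι → ℝ) :
    contract4 (fun a b c e => ∑ x, T x a b c e) u v w z = ∑ x, contract4 (T x) u v w z := by
  symm
  simp only [contract4, sum_mul]
  rw [sum_comm]; refine sum_congr rfl fun a _ => ?_
  rw [sum_comm]; refine sum_congr rfl fun b _ => ?_
  rw [sum_comm]; refine sum_congr rfl fun c _ => ?_
  rw [sum_comm]

theorem contract4_sum_rankOne {κ : Type*} [Fintype κ] (m : κ → ℝ) (A : Matrix ι κ ℝ)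
    (u v w z : ι → ℝ) :
    contract4 (fun a b c e => ∑ x, m x * A a x * A b x * A c x * A e x) u v w z
      = ∑ x, m x * ((u ᵥ* A) x * (v ᵥ* A) x * (w ᵥ* A) x * (z ᵥ* A) x) := by
  rw [contract4_sum]
  refine sum_congr rfl fun x _ => ?_
  have regroup : ∀ a b c e, m x * A a x * A b x * A c x * A e x * u a * v b * w c * z e
      = m x * (u a * A a x) * (v b * A b x) * (w c * A c x) * (z e * A e x) :=
    fun _ _ _ _ => by ring
  simp only [contract4, vecMul, dotProduct, regroup, ← mul_sum, ← sum_mul]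
  ring

variable {Ω : Type*} [MeasurableSpace Ω] {μ : Measure Ω}

theorem contract4_integral {T : ι → ι → ι → ι → Ω → ℝ}
    (hT : ∀ a b c e, Integrable (T a b c e) μ) (u v w z : ι → ℝ) :
    contract4 (fun a b c e => ∫ ω, T a b c e ω ∂μ) u v w z
      = ∫ ω, contract4 (fun a b c e => T a b c e ω) u v w z ∂μ := by
  simp only [contract4, ← Fintype.sum_prod_type']
  rw [integral_finsetSum _ fun _ _ =>
    ((((hT _ _ _ _).mul_const _).mul_const _).mul_const _).mul_const _]
  simp only [integral_mul_const]

theorem integrable_contract4 {T : ι → ι → ι → ι → Ω → ℝ}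
    (hT : ∀ a b c e, Integrable (T a b c e) μ) (u v w z : ι → ℝ) :
    Integrable (fun ω => contract4 (fun a b c e => T a b c e ω) u v w z) μ := by
  simp only [contract4, ← Fintype.sum_prod_type']
  exact integrable_finsetSum _ fun _ _ =>
    ((((hT _ _ _ _).mul_const _).mul_const _).mul_const _).mul_const _

theorem integrable_dotProduct_mul4 {f : Ω → ι → ℝ}
    (hf : ∀ a b c e, Integrable (fun ω => f ω a * f ω b * f ω c * f ω e) μ)
    (u v w z : ι → ℝ) :
    Integrable (fun ω => (f ω ⬝ᵥ u) * (f ω ⬝ᵥ v) * (f ω ⬝ᵥ w) * (f ω ⬝ᵥ z)) μ := by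
  simpa only [contract4_rankOne] using integrable_contract4 hf u v w z

theorem contract4_moment {f : Ω → ι → ℝ}
    (hf : ∀ a b c e, Integrable (fun ω => f ω a * f ω b * f ω c * f ω e) μ)
    (u v w z : ι → ℝ) :
    contract4 (fun a b c e => ∫ ω, f ω a * f ω b * f ω c * f ω e ∂μ) u v w z
      = ∫ ω, (f ω ⬝ᵥ u) * (f ω ⬝ᵥ v) * (f ω ⬝ᵥ w) * (f ω ⬝ᵥ z) ∂μ := by
  simp only [contract4_integral hf, contract4_rankOne]

end Contraction

section Pairings

variable {ι : Type*} [DecidableEq ι]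

def HasUniqueIndex {n : ℕ} (i : Fin n → ι) : Prop :=
  ∃ t, ∀ s, i s = i t → s = t

theorem HasUniqueIndex.exists_card_filter_eq_one {n : ℕ} {i : Fin n → ι}
    (hi : HasUniqueIndex i) : ∃ t, #{s | i s = i t} = 1 := by
  obtain ⟨t, ht⟩ := hi
  refine ⟨t, card_eq_one.2 ⟨t, ?_⟩⟩
  ext s
  simpa using ⟨ht s, fun hst => hst ▸ rfl⟩

theorem eq_diag_add_pairings {T : ι → ι → ι → ι → ℝ}
    (hT : ∀ a b c e, HasUniqueIndex ![a, b, c, e] → T a b c e = 0) (a b c e : ι) :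
    T a b c e = (if b = a ∧ c = a ∧ e = a then T a a a a else 0)
      + (if b = a ∧ e = c ∧ c ≠ a then T a a c c else 0)
      + (if c = a ∧ e = b ∧ b ≠ a then T a b a b else 0)
      + (if e = a ∧ c = b ∧ b ≠ a then T a b b a else 0) := by
  have h0 : b ≠ a → c ≠ a → e ≠ a → T a b c e = 0 := fun _ _ _ =>
    hT a b c e ⟨0, fun s => by fin_cases s <;> simp_all [eq_comm]⟩
  have h1 : b ≠ a → c ≠ b → e ≠ b → T a b c e = 0 := fun _ _ _ =>
    hT a b c e ⟨1, fun s => by fin_cases s <;> simp_all [eq_comm]⟩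
  have h2 : c ≠ a → c ≠ b → e ≠ c → T a b c e = 0 := fun _ _ _ =>
    hT a b c e ⟨2, fun s => by fin_cases s <;> simp_all [eq_comm]⟩
  have h3 : e ≠ a → e ≠ b → e ≠ c → T a b c e = 0 := fun _ _ _ =>
    hT a b c e ⟨3, fun s => by fin_cases s <;> simp_all [eq_comm]⟩
  by_cases hba : b = a <;> by_cases hca : c = a <;> by_cases hea : e = a <;>
    by_cases hcb : c = b <;> by_cases heb : e = b <;> by_cases hec : e = c <;>
    simp_all

variable [Fintype ι]

theorem contract4_eq_diag_add_pairings {T : ι → ι → ι → ι → ℝ}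
    (hT : ∀ a b c e, HasUniqueIndex ![a, b, c, e] → T a b c e = 0) (p q r s : ι → ℝ) :
    contract4 T p q r s = ∑ x, T x x x x * (p x * q x * r x * s x)
      + ∑ x, ∑ y, (if y = x then 0 else T x x y y * (p x * q x) * (r y * s y))
      + ∑ x, ∑ y, (if y = x then 0 else T x y x y * (p x * r x) * (q y * s y))
      + ∑ x, ∑ y, (if y = x then 0 else T x y y x * (p x * s x) * (q y * r y)) := by
  have hT' : T = fun a b c e => (if b = a ∧ c = a ∧ e = a then T a a a a else 0)
      + (if b = a ∧ e = c ∧ c ≠ a then T a a c c else 0)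
      + (if c = a ∧ e = b ∧ b ≠ a then T a b a b else 0)
      + (if e = a ∧ c = b ∧ b ≠ a then T a b b a else 0) := by
    funext a b c e; exact eq_diag_add_pairings hT a b c e
  conv_lhs => rw [hT']
  simp only [contract4, ite_and, ne_eq, ite_not, add_mul, ite_mul, zero_mul, sum_add_distrib,
    sum_ite_irrel, sum_ite_eq', mem_univ, ↓reduceIte, sum_const_zero]
  simp only [mul_comm, mul_left_comm]

theorem abs_sum_offDiag_le {N : ι → ι → ℝ} {τ : ℝ} (hτ : 0 ≤ τ)
    (hN : ∀ x y, y ≠ x → |N x y| ≤ τ) (f g : ι → ℝ) :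
    |∑ x, ∑ y, (if y = x then 0 else N x y * f x * g y)|
      ≤ τ * ((∑ x, |f x|) * ∑ y, |g y|) := by
  calc |∑ x, ∑ y, (if y = x then 0 else N x y * f x * g y)|
      ≤ ∑ x, ∑ y, |if y = x then 0 else N x y * f x * g y| :=
        (abs_sum_le_sum_abs _ _).trans (sum_le_sum fun x _ => abs_sum_le_sum_abs _ _)
    _ ≤ ∑ x, ∑ y, τ * (|f x| * |g y|) := by
        refine sum_le_sum fun x _ => sum_le_sum fun y _ => ?_
        split_ifs with hyx
        · simp only [abs_zero]; positivity
        · rw [abs_mul, abs_mul, mul_assoc]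
          exact mul_le_mul_of_nonneg_right (hN x y hyx) (by positivity)
    _ = τ * ((∑ x, |f x|) * ∑ y, |g y|) := by
        rw [sum_mul_sum]; simp only [mul_sum]

end Pairings

theorem sum_abs_mul_le_norm_mul_norm {ι : Type*} [Fintype ι] (p q : ι → ℝ) :
    ∑ x, |p x * q x|
      ≤ ‖(WithLp.toLp 2 p : EuclideanSpace ℝ ι)‖ * ‖(WithLp.toLp 2 q : EuclideanSpace ℝ ι)‖ := by
  simp only [EuclideanSpace.norm_eq, Real.norm_eq_abs, abs_mul]
  exact Real.sum_mul_le_sqrt_mul_sqrt _ _ _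

open scoped Matrix.Norms.L2Operator in
theorem norm_vecMul_le {d k : ℕ} (A : Matrix (Fin d) (Fin k) ℝ)
    (u : EuclideanSpace ℝ (Fin d)) :
    ‖(WithLp.toLp 2 (u.ofLp ᵥ* A) : EuclideanSpace ℝ (Fin k))‖ ≤ specNorm d k A * ‖u‖ := by
  have hA : specNorm d k A = ‖Aᵀ‖ := by
    rw [← conjTranspose_eq_transpose_of_trivial, l2_opNorm_conjTranspose]; rfl
  rw [hA, ← mulVec_transpose]
  exact l2_opNorm_mulVec Aᵀ u

theorem sum_abs_vecMul_mul_le {d k : ℕ} (A : Matrix (Fin d) (Fin k) ℝ)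
    (u v : EuclideanSpace ℝ (Fin d)) :
    ∑ x, |(u.ofLp ᵥ* A) x * (v.ofLp ᵥ* A) x| ≤ specNorm d k A ^ 2 * (‖u‖ * ‖v‖) := by
  calc ∑ x, |(u.ofLp ᵥ* A) x * (v.ofLp ᵥ* A) x|
      ≤ (specNorm d k A * ‖u‖) * (specNorm d k A * ‖v‖) :=
        (sum_abs_mul_le_norm_mul_norm _ _).trans
          (mul_le_mul (norm_vecMul_le A u) (norm_vecMul_le A v) (norm_nonneg _)
            (mul_nonneg (norm_nonneg _) (norm_nonneg _)))
    _ = specNorm d k A ^ 2 * (‖u‖ * ‖v‖) := by ring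

theorem stmt_6_general {Ω : Type*} [MeasurableSpace Ω] (μ : Measure Ω)
    (d k : ℕ) (τ : ℝ) (hτ : 0 ≤ τ) (h : Ω → Fin k → ℝ)
    (A : Matrix (Fin d) (Fin k) ℝ)
    (hint : ∀ i j l m : Fin k, Integrable (fun ω => h ω i * h ω j * h ω l * h ω m) μ)
    (hcross : ∀ i j : Fin k, i ≠ j → ∫ ω, (h ω i) ^ 2 * (h ω j) ^ 2 ∂μ ≤ τ)
    (hsingle : ∀ i j l m : Fin k,
      (∃ t : Fin 4, (Finset.univ.filter fun s : Fin 4 =>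
          (![i, j, l, m] : Fin 4 → Fin k) s = ![i, j, l, m] t).card = 1) →
      ∫ ω, h ω i * h ω j * h ω l * h ω m ∂μ = 0)
    (u v w z : EuclideanSpace ℝ (Fin d))
    (hu : ‖u‖ = 1) (hv : ‖v‖ = 1) (hw : ‖w‖ = 1) (hz : ‖z‖ = 1) :
    |∑ i₁, ∑ i₂, ∑ i₃, ∑ i₄,
        ((∫ ω, A.mulVec (h ω) i₁ * A.mulVec (h ω) i₂ * A.mulVec (h ω) i₃ *
            A.mulVec (h ω) i₄ ∂μ)
          - ∑ i, (∫ ω, (h ω i) ^ 4 ∂μ) * A i₁ i * A i₂ i * A i₃ i * A i₄ i)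
        * u i₁ * v i₂ * w i₃ * z i₄|
      ≤ 3 * τ * (specNorm d k A) ^ 4 := by
  set M : Fin k → Fin k → Fin k → Fin k → ℝ :=
    fun a b c e => ∫ ω, h ω a * h ω b * h ω c * h ω e ∂μ
  have hM : ∀ a b c e, HasUniqueIndex ![a, b, c, e] → M a b c e = 0 := fun a b c e hi =>
    hsingle a b c e hi.exists_card_filter_eq_one
  have hdiag : ∀ x, ∫ ω, h ω x ^ 4 ∂μ = M x x x x := fun x =>
    integral_congr_ae (ae_of_all _ fun ω => by ring)
  have hpair : ∀ x y, y ≠ x → ∀ F : Ω → ℝ, (∀ ω, F ω = h ω x ^ 2 * h ω y ^ 2) →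
      |∫ ω, F ω ∂μ| ≤ τ := by
    intro x y hyx F hF
    simp only [hF]
    rw [abs_of_nonneg (integral_nonneg fun ω => by positivity)]
    exact hcross x y hyx.symm
  have hAh : ∀ ω (y : Fin d → ℝ), (A *ᵥ h ω) ⬝ᵥ y = h ω ⬝ᵥ (y ᵥ* A) := fun ω y => by
    rw [dotProduct_comm, dotProduct_mulVec, dotProduct_comm]
  have hAh_int : ∀ i₁ i₂ i₃ i₄, Integrable (fun ω => (A *ᵥ h ω) i₁ * (A *ᵥ h ω) i₂ *
      (A *ᵥ h ω) i₃ * (A *ᵥ h ω) i₄) μ := fun i₁ i₂ i₃ i₄ => by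
    have := integrable_dotProduct_mul4 hint (A i₁) (A i₂) (A i₃) (A i₄)
    simp only [dotProduct_comm (h _)] at this
    exact this
  have hS : ∀ a b : EuclideanSpace ℝ (Fin d), ‖a‖ = 1 → ‖b‖ = 1 →
      ∑ x, |(a.ofLp ᵥ* A) x * (b.ofLp ᵥ* A) x| ≤ specNorm d k A ^ 2 := fun a b ha hb => by
    simpa only [ha, hb, mul_one] using sum_abs_vecMul_mul_le A a b
  set p := u.ofLp ᵥ* A
  set q := v.ofLp ᵥ* A
  set r := w.ofLp ᵥ* A
  set s := z.ofLp ᵥ* A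
  show |contract4 (fun i₁ i₂ i₃ i₄ => _ - _) u.ofLp v.ofLp w.ofLp z.ofLp| ≤ _
  rw [contract4_sub, contract4_moment hAh_int, contract4_sum_rankOne]
  simp only [hAh, hdiag]
  rw [← contract4_moment hint, contract4_eq_diag_add_pairings hM, add_assoc, add_assoc,
    add_sub_cancel_left]
  calc _ ≤ _ := (abs_add_le _ _).trans (add_le_add_right (abs_add_le _ _) _)
    _ ≤ τ * ((∑ x, |p x * q x|) * ∑ y, |r y * s y|)
        + (τ * ((∑ x, |p x * r x|) * ∑ y, |q y * s y|)
        + τ * ((∑ x, |p x * s x|) * ∑ y, |q y * r y|)) := by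
        gcongr <;>
          exact abs_sum_offDiag_le hτ (fun x y hyx => hpair x y hyx _ fun ω => by ring) _ _
    _ ≤ τ * (specNorm d k A ^ 2 * specNorm d k A ^ 2)
        + (τ * (specNorm d k A ^ 2 * specNorm d k A ^ 2)
        + τ * (specNorm d k A ^ 2 * specNorm d k A ^ 2)) := by
        gcongr <;> apply hS <;> assumption
    _ = 3 * τ * specNorm d k A ^ 4 := by ring

theorem stmt_6 {Ω : Type*} [MeasurableSpace Ω] (μ : Measure Ω) [IsProbabilityMeasure μ]
    (d k : ℕ) (τ : ℝ) (hτ : 0 ≤ τ) (h : Ω → Fin k → ℝ)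
    (A : Matrix (Fin d) (Fin k) ℝ)
    (hint : ∀ i j l m : Fin k, Integrable (fun ω => h ω i * h ω j * h ω l * h ω m) μ)
    (hcross : ∀ i j : Fin k, i ≠ j → ∫ ω, (h ω i) ^ 2 * (h ω j) ^ 2 ∂μ ≤ τ)
    (hodd : ∀ i j : Fin k, i ≠ j → ∫ ω, (h ω i) ^ 3 * h ω j ∂μ = 0)
    (hsingle : ∀ i j l m : Fin k,
      (∃ t : Fin 4, (Finset.univ.filter fun s : Fin 4 =>
          (![i, j, l, m] : Fin 4 → Fin k) s = ![i, j, l, m] t).card = 1) →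
      ∫ ω, h ω i * h ω j * h ω l * h ω m ∂μ = 0)
    (u v w z : EuclideanSpace ℝ (Fin d))
    (hu : ‖u‖ = 1) (hv : ‖v‖ = 1) (hw : ‖w‖ = 1) (hz : ‖z‖ = 1) :
    |∑ i₁, ∑ i₂, ∑ i₃, ∑ i₄,
        ((∫ ω, A.mulVec (h ω) i₁ * A.mulVec (h ω) i₂ * A.mulVec (h ω) i₃ *
            A.mulVec (h ω) i₄ ∂μ)
          - ∑ i, (∫ ω, (h ω i) ^ 4 ∂μ) * A i₁ i * A i₂ i * A i₃ i * A i₄ i)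
        * u i₁ * v i₂ * w i₃ * z i₄|
      ≤ 3 * τ * (specNorm d k A) ^ 4 :=
  stmt_6_general μ d k τ hτ h A hint hcross hsingle u v w z hu hv hw hz
end

section
/- Consider the multiview mixture model: h is a discrete random variable on [k] with P[h=j]=w_j, and conditional on h, the three views satisfy x₁ = a_h + z₁, x₂ = b_h + z₂, x₃ = c_h + z₃ where z₁, z₂, z₃ are zero-mean random vectors in ℝ^d, mutually independent and independent of h. Then E[x₁ ⊗ x₂ ⊗ x₃] = Σ_{j∈[k]} w_j · a_j ⊗ b_j ⊗ c_j. -/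
open MeasureTheory ProbabilityTheory

/-- Index family for the four random objects `(h, z₁, z₂, z₃)` of the multiview model. -/
def fam7 (d k : ℕ) : Option (Fin 3) → Type
  | none => Fin k
  | some _ => Fin d → ℝ

instance fam7MeasurableSpace (d k : ℕ) : ∀ o, MeasurableSpace (fam7 d k o)
  | none => inferInstanceAs (MeasurableSpace (Fin k))
  | some _ => inferInstanceAs (MeasurableSpace (Fin d → ℝ))

/-- The four random objects `(h, z₁, z₂, z₃)` bundled as a dependent family. -/
def quad7 {Ω : Type*} {d k : ℕ} (h : Ω → Fin k) (z₁ z₂ z₃ : Ω → Fin d → ℝ) :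
    ∀ o : Option (Fin 3), Ω → fam7 d k o
  | none => h
  | some j => ![z₁, z₂, z₃] j

/-! Conditioning on `h`: pointwise the integrand is `∑ m, 1{h = m} (a_m + z₁)(b_m + z₂)(c_m + z₃)`.
Independence of `(h, z₁, z₂, z₃)` factors the expectation of each summand into
`P(h = m) · E[a_m + z₁] · E[b_m + z₂] · E[c_m + z₃] = w_m a_m b_m c_m`, the noises having mean zero. -/

namespace ProbabilityTheory

variable {Ω ι : Type*} [Fintype ι] {mΩ : MeasurableSpace Ω} {μ : Measure Ω}

theorem iIndepFun.integrable_fun_prod_comp {β : ι → Type*} {mβ : ∀ i, MeasurableSpace (β i)}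
    {X : ∀ i, Ω → β i} {f : ∀ i, β i → ℝ} (hX : iIndepFun X μ)
    (mX : ∀ i, AEMeasurable (X i) μ) (hf : ∀ i, AEStronglyMeasurable (f i) (μ.map (X i)))
    (hint : ∀ i, Integrable (fun ω ↦ f i (X i ω)) μ) :
    Integrable (fun ω ↦ ∏ i, f i (X i ω)) μ := by
  have := hX.isProbabilityMeasure
  have hprod : Integrable (fun x : ∀ i, β i ↦ ∏ i, f i (x i)) (μ.map fun ω i ↦ X i ω) := by
    rw [hX.map_fun_eq_pi_map mX]
    exact .fintype_prod_dep fun i ↦ (integrable_map_measure (hf i) (mX i)).2 (hint i)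
  exact hprod.comp_aemeasurable (aemeasurable_pi_lambda _ mX)

theorem iIndepFun.integral_mixture_prod_eq_sum {β : Option ι → Type*}
    {mβ : ∀ o, MeasurableSpace (β o)} [Fintype (β none)] [MeasurableSingletonClass (β none)]
    {X : ∀ o, Ω → β o} (hX : iIndepFun X μ) (mX : ∀ o, Measurable (X o))
    {g : β none → ∀ i, β (some i) → ℝ} (hg : ∀ m i, Measurable (g m i))
    (hint : ∀ m i, Integrable (fun ω ↦ g m i (X (some i) ω)) μ) :
    ∫ ω, ∏ i, g (X none ω) i (X (some i) ω) ∂μ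
      = ∑ m, μ.real (X none ⁻¹' {m}) * ∏ i, ∫ ω, g m i (X (some i) ω) ∂μ := by
  classical
  let f (m : β none) : ∀ o, β o → ℝ
    | none => ({m} : Set (β none)).indicator 1
    | some i => g m i
  have hf : ∀ m o, Measurable (f m o) := by
    rintro m (_ | i)
    · exact measurable_one.indicator (measurableSet_singleton m)
    · exact hg m i
  have hfX : ∀ m o, Integrable (fun ω ↦ f m o (X o ω)) μ := by
    have := hX.isProbabilityMeasure
    rintro m (_ | i)
    · exact (integrable_const 1).indicator (mX none (measurableSet_singleton m))
    · exact hint m i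
  have hsplit : ∀ ω, ∏ i, g (X none ω) i (X (some i) ω) = ∑ m, ∏ o, f m o (X o ω) := by
    intro ω
    simp [f, Fintype.prod_option, Pi.single_apply]
  simp_rw [hsplit]
  rw [integral_finsetSum _ fun m _ ↦ hX.integrable_fun_prod_comp (fun o ↦ (mX o).aemeasurable)
    (fun o ↦ (hf m o).aestronglyMeasurable) (hfX m)]
  refine Finset.sum_congr rfl fun m _ ↦ ?_
  rw [hX.integral_fun_prod_comp (fun o ↦ (mX o).aemeasurable)
    (fun o ↦ (hf m o).aestronglyMeasurable), Fintype.prod_option]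
  congr 1
  exact integral_indicator_one (mX none (measurableSet_singleton m))

end ProbabilityTheory

theorem stmt_7 {Ω : Type*} [MeasurableSpace Ω] (μ : Measure Ω) [IsProbabilityMeasure μ]
    (d k : ℕ) (a b c : Fin k → Fin d → ℝ) (w : Fin k → ℝ)
    (h : Ω → Fin k) (z₁ z₂ z₃ : Ω → Fin d → ℝ)
    (hmh : Measurable h)
    (hm1 : Measurable z₁) (hm2 : Measurable z₂) (hm3 : Measurable z₃)
    (hi1 : ∀ i, Integrable (fun ω => z₁ ω i) μ)
    (hi2 : ∀ i, Integrable (fun ω => z₂ ω i) μ)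
    (hi3 : ∀ i, Integrable (fun ω => z₃ ω i) μ)
    (hw : ∀ j, (μ {ω | h ω = j}).toReal = w j)
    (h01 : ∀ i, ∫ ω, z₁ ω i ∂μ = 0)
    (h02 : ∀ i, ∫ ω, z₂ ω i ∂μ = 0)
    (h03 : ∀ i, ∫ ω, z₃ ω i ∂μ = 0)
    (hindep : iIndepFun (m := fam7MeasurableSpace d k) (quad7 h z₁ z₂ z₃) μ) :
    ∀ i j l : Fin d,
      ∫ ω, (a (h ω) i + z₁ ω i) * (b (h ω) j + z₂ ω j) * (c (h ω) l + z₃ ω l) ∂μ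
        = ∑ m, w m * a m i * b m j * c m l := by
  intro i j l
  have hquad : ∀ o, Measurable (quad7 h z₁ z₂ z₃ o) := by
    rintro (_ | n)
    · exact hmh
    · fin_cases n <;> assumption
  have hview : ∀ (n : Fin 3) (u : ℝ),
      Integrable (fun ω ↦ u + quad7 h z₁ z₂ z₃ (some n) ω (![i, j, l] n)) μ ∧
        ∫ ω, u + quad7 h z₁ z₂ z₃ (some n) ω (![i, j, l] n) ∂μ = u := by
    intro n u
    fin_cases n
    · exact ⟨(integrable_const u).add (hi1 i), by simp [quad7, integral_add, hi1, h01]⟩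
    · exact ⟨(integrable_const u).add (hi2 j), by simp [quad7, integral_add, hi2, h02]⟩
    · exact ⟨(integrable_const u).add (hi3 l), by simp [quad7, integral_add, hi3, h03]⟩
  let : Fintype (fam7 d k none) := inferInstanceAs (Fintype (Fin k))
  have : MeasurableSingletonClass (fam7 d k none) :=
    inferInstanceAs (MeasurableSingletonClass (Fin k))
  have hmix := hindep.integral_mixture_prod_eq_sum hquad
    (g := fun m n v ↦ ![a m i, b m j, c m l] n + v (![i, j, l] n))
    (fun m n ↦ measurable_const.add (measurable_pi_apply _)) (fun m n ↦ (hview n _).1)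
  simp only [fun n ↦ (hview n _).2] at hmix
  simp only [quad7, Fin.prod_univ_three, Matrix.cons_val_zero, Matrix.cons_val_one, Matrix.cons_val] at hmix
  simp_rw [hmix, ← hw, mul_assoc]
  rfl
end

section
/- Let x = Σ_{j∈[k]} 1{h=j}(a_j + z) where h is a categorical random variable with P[h=j]=w_j, a_j ∈ ℝ^d, and z ∼ N(0, ζ² I_d) is independent of h (i.e., a mixture of spherical Gaussians with common covariance ζ² I). Then E[x ⊗ x ⊗ x] − ζ² Σ_{i∈[d]} ( E[x] ⊗ e_i ⊗ e_i + e_i ⊗ E[x] ⊗ e_i + e_i ⊗ e_i ⊗ E[x] ) = Σ_{j∈[k]} w_j · a_j ⊗ a_j ⊗ a_j. -/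
/-! Independence of `h` and `z` turns each moment of `x = a_h + z` into the mixture
`∑ j, w j * E[F (a j + z)]`. The centred Gaussian `z` is symmetric, so its odd moments vanish,
while `E[z p * z q] = ζ² δ_pq`. Expanding `(a j + z)^{⊗3}` thus leaves `a j ^{⊗3}` plus `ζ²`
times the three placements of `a j ⊗ I`, and averaging over `j` the latter is exactly the
correction built from `E[x] = ∑ j, w j * a j`. -/

open MeasureTheory ProbabilityTheory

theorem integral_comp_eq_sum_of_indepFun {Ω ι E : Type*} [MeasurableSpace Ω] {μ : Measure Ω}
    [IsFiniteMeasure μ] [Fintype ι] [MeasurableSpace ι] [DiscreteMeasurableSpace ι]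
    [MeasurableSpace E] {h : Ω → ι} {z : Ω → E} (hh : Measurable h) (hz : Measurable z)
    (hind : IndepFun h z μ) (F : ι → E → ℝ) (hF : ∀ j, Measurable (F j))
    (hFi : ∀ j, Integrable (F j) (μ.map z)) :
    ∫ ω, F (h ω) (z ω) ∂μ = ∑ j, μ.real {ω | h ω = j} * ∫ x, F j x ∂(μ.map z) := by
  classical
  have hsplit : ∀ ω, F (h ω) (z ω) = ∑ j, (if h ω = j then 1 else 0) * F j (z ω) := fun ω => by
    simp [ite_mul, Finset.sum_ite_eq]
  have hindep_j : ∀ j,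
      IndepFun (fun ω => if h ω = j then (1 : ℝ) else 0) (fun ω => F j (z ω)) μ :=
    fun j => hind.comp (φ := fun i => if i = j then (1 : ℝ) else 0) Measurable.of_discrete (hF j)
  have hFz : ∀ j, Integrable (fun ω => F j (z ω)) μ := fun j =>
    (integrable_map_measure (hF j).aestronglyMeasurable hz.aemeasurable).1 (hFi j)
  have hmass_int : ∀ j, Integrable (fun ω => if h ω = j then (1 : ℝ) else 0) μ := fun j =>
    (integrable_const (1 : ℝ)).indicator (hh (measurableSet_singleton j)) |>.congr
      (ae_of_all _ fun ω => by simp [Set.indicator])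
  have hmass : ∀ j, ∫ ω, (if h ω = j then (1 : ℝ) else 0) ∂μ = μ.real {ω | h ω = j} := fun j => by
    rw [← integral_indicator_one (measurableSet_eq_fun hh measurable_const)]
    simp [Set.indicator_apply]
  have hint : ∀ j, Integrable (fun ω => (if h ω = j then (1 : ℝ) else 0) * F j (z ω)) μ :=
    fun j => (hindep_j j).integrable_mul (hmass_int j) (hFz j)
  simp_rw [hsplit]
  rw [integral_finsetSum _ fun j _ => hint j]
  refine Finset.sum_congr rfl fun j _ => ?_
  rw [integral_map hz.aemeasurable (hF j).aestronglyMeasurable, ← hmass j]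
  exact (hindep_j j).integral_mul_eq_mul_integral (hmass_int j).aestronglyMeasurable
    (hFz j).aestronglyMeasurable

theorem integrable_prod_of_memLp {α 𝕜 : Type*} [NormedCommRing 𝕜] [MeasurableSpace α]
    {μ : Measure α} [IsFiniteMeasure μ] {n : ℕ} {f : Fin n → α → 𝕜} (hf : ∀ m, MemLp (f m) n μ) :
    Integrable (fun x => ∏ m, f m x) μ := by
  rcases eq_or_ne n 0 with rfl | hn
  · simp
  · have h := MemLp.prod' (s := Finset.univ) (p := fun _ => (n : ENNReal)) fun m _ => hf m
    have hexp : (∑ _m : Fin n, (n : ENNReal)⁻¹)⁻¹ = 1 := by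
      simp [ENNReal.mul_inv_cancel, hn]
    rw [hexp] at h
    exact memLp_one_iff_integrable.1 h

theorem Function.Odd.integral_eq_zero {G : Type*} [AddGroup G] [MeasurableSpace G]
    [MeasurableNeg G] {μ : Measure G} [μ.IsNegInvariant] {f : G → ℝ} (hf : f.Odd) :
    ∫ x, f x ∂μ = 0 := by
  have h := integral_neg_eq_self f μ
  simp only [hf _, integral_neg] at h
  linarith

section CoordinateMoments

variable {ι : Type*} {ν : Measure (ι → ℝ)} [IsProbabilityMeasure ν]
  (hν : ∀ i, MemLp (fun x => x i) 3 ν)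
include hν

theorem integrable_eval_of_memLp (s : ι) : Integrable (fun x => x s) ν :=
  memLp_one_iff_integrable.1 ((hν s).mono_exponent (by norm_num))

theorem integrable_const_add_eval_mul (c : ι → ℝ) (p q r : ι) :
    Integrable (fun x => (c p + x p) * (c q + x q) * (c r + x r)) ν := by
  have hshift : ∀ s, MemLp (fun x => c s + x s) 3 ν := fun s => (memLp_const (c s)).add (hν s)
  simpa [Fin.prod_univ_three] using
    integrable_prod_of_memLp (n := 3) (f := ![_, _, _]) (Fin.forall_fin_succ.2
      ⟨hshift p, Fin.forall_fin_succ.2 ⟨hshift q, Fin.forall_fin_succ.2 ⟨hshift r, finZeroElim⟩⟩⟩)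

variable [ν.IsNegInvariant]

theorem integral_const_add_eval (c : ι → ℝ) (s : ι) : ∫ x, (c s + x s) ∂ν = c s := by
  have hodd : Function.Odd fun x : ι → ℝ => x s := fun x => rfl
  rw [integral_add (integrable_const _) (integrable_eval_of_memLp hν s), hodd.integral_eq_zero]
  simp

theorem integral_const_add_eval_mul (c : ι → ℝ) (p q r : ι) :
    ∫ x, (c p + x p) * (c q + x q) * (c r + x r) ∂ν
      = c p * c q * c r + c p * ∫ x, x q * x r ∂ν + c q * ∫ x, x p * x r ∂ν
        + c r * ∫ x, x p * x q ∂ν := by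
  have hlin := integrable_eval_of_memLp hν
  have hquad : ∀ s t, Integrable (fun x => x s * x t) ν := fun s t =>
    ((hν s).mono_exponent (p := 2) (by norm_num)).integrable_mul
      ((hν t).mono_exponent (p := 2) (by norm_num))
  have hcub : Integrable (fun x => x p * x q * x r) ν := by
    simpa using integrable_const_add_eval_mul hν 0 p q r
  have hqr_pr : Integrable (fun x => c p * (x q * x r) + c q * (x p * x r)) ν :=
    ((hquad q r).const_mul _).fun_add ((hquad p r).const_mul _)
  have heven_int : Integrable
      (fun x => c p * (x q * x r) + c q * (x p * x r) + c r * (x p * x q)) ν :=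
    hqr_pr.fun_add ((hquad p q).const_mul _)
  have hodd_int : Integrable
      (fun x => c p * c q * x r + c p * c r * x q + c q * c r * x p + x p * x q * x r) ν :=
    ((((hlin r).const_mul _).fun_add ((hlin q).const_mul _)).fun_add
      ((hlin p).const_mul _)).fun_add hcub
  have hodd : Function.Odd
      (fun x : ι → ℝ => c p * c q * x r + c p * c r * x q + c q * c r * x p + x p * x q * x r) :=
    fun x => by simp only [Pi.neg_apply]; ring
  calc ∫ x, (c p + x p) * (c q + x q) * (c r + x r) ∂ν
      = ∫ x, (c p * c q * c r + (c p * (x q * x r) + c q * (x p * x r) + c r * (x p * x q))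
          + (c p * c q * x r + c p * c r * x q + c q * c r * x p + x p * x q * x r)) ∂ν := by
        congr 1; ext x; ring
    _ = c p * c q * c r + (c p * ∫ x, x q * x r ∂ν + c q * ∫ x, x p * x r ∂ν
          + c r * ∫ x, x p * x q ∂ν) + 0 := by
        rw [integral_add ((integrable_const _).fun_add heven_int) hodd_int,
          integral_add (integrable_const _) heven_int, hodd.integral_eq_zero,
          integral_add hqr_pr ((hquad p q).const_mul _),
          integral_add ((hquad q r).const_mul _) ((hquad p r).const_mul _)]
        simp [integral_const_mul]
    _ = _ := by ring

end CoordinateMoments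

instance isNegInvariant_gaussianReal (v : NNReal) : (gaussianReal 0 v).IsNegInvariant :=
  ⟨by simpa [Measure.neg_def] using gaussianReal_map_neg (μ := 0) (v := v)⟩

theorem integral_mul_self_gaussianReal (v : NNReal) : ∫ y, y * y ∂(gaussianReal 0 v) = v := by
  have h := variance_of_integral_eq_zero (μ := gaussianReal 0 v) aemeasurable_id
    integral_id_gaussianReal
  simp only [variance_id_gaussianReal, id] at h
  simp [h, sq]

section GaussianProduct

variable {ι : Type*} [Fintype ι] (m : ℝ) (v : NNReal)

theorem memLp_eval_pi_gaussianReal (i : ι) {p : ENNReal} (hp : p ≠ ⊤) :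
    MemLp (fun x => x i) p (Measure.pi fun _ => gaussianReal m v) :=
  (memLp_id_gaussianReal' p hp).comp_measurePreserving (measurePreserving_eval _ i)

theorem integral_eval_mul_eval_pi_gaussianReal [DecidableEq ι] (s t : ι) :
    ∫ x, x s * x t ∂(Measure.pi fun _ => gaussianReal 0 v) = if s = t then (v : ℝ) else 0 := by
  split_ifs with hst
  · subst hst
    rw [integral_comp_eval (f := fun y => y * y) (by fun_prop), integral_mul_self_gaussianReal]
  · have hind := (iIndepFun_pi (μ := fun _ : ι => gaussianReal 0 v) (X := fun _ => id)
      fun _ => aemeasurable_id).indepFun hst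
    have := hind.integral_mul_eq_mul_integral
      (measurable_pi_apply s).aestronglyMeasurable (measurable_pi_apply t).aestronglyMeasurable
    simpa [integral_eval, integral_id_gaussianReal] using this

end GaussianProduct

theorem stmt_8 {Ω : Type*} [MeasurableSpace Ω] (μ : Measure Ω) [IsProbabilityMeasure μ]
    (d k : ℕ) (a : Fin k → Fin d → ℝ) (w : Fin k → ℝ) (ζ : NNReal)
    (h : Ω → Fin k) (z : Ω → Fin d → ℝ)
    (hmh : Measurable h) (hmz : Measurable z)
    (hw : ∀ j, (μ {ω | h ω = j}).toReal = w j)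
    (hzlaw : Measure.map z μ = Measure.pi fun _ : Fin d => gaussianReal 0 (ζ ^ 2))
    (hindep : IndepFun h z μ) :
    ∀ p q r : Fin d,
      (∫ ω, (a (h ω) p + z ω p) * (a (h ω) q + z ω q) * (a (h ω) r + z ω r) ∂μ)
        - (ζ : ℝ) ^ 2 *
          ((if q = r then ∫ ω, (a (h ω) p + z ω p) ∂μ else 0)
            + (if p = r then ∫ ω, (a (h ω) q + z ω q) ∂μ else 0)
            + (if p = q then ∫ ω, (a (h ω) r + z ω r) ∂μ else 0))
      = ∑ j, w j * a j p * a j q * a j r := by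
  intro p q r
  set ν := Measure.pi fun _ : Fin d => gaussianReal 0 (ζ ^ 2) with hν_def
  have hν : ∀ i, MemLp (fun x => x i) 3 ν := fun i => memLp_eval_pi_gaussianReal 0 _ i (by simp)
  have hmix : ∀ F : Fin k → (Fin d → ℝ) → ℝ, (∀ j, Measurable (F j)) →
      (∀ j, Integrable (F j) ν) → ∫ ω, F (h ω) (z ω) ∂μ = ∑ j, w j * ∫ x, F j x ∂ν := by
    intro F hF hFi
    rw [integral_comp_eq_sum_of_indepFun hmh hmz hindep F hF (hzlaw ▸ hFi), hzlaw]
    simp [measureReal_def, hw]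
  have hmean : ∀ s, ∫ ω, (a (h ω) s + z ω s) ∂μ = ∑ j, w j * a j s := fun s => by
    rw [hmix (fun j x => a j s + x s) (fun j => by fun_prop) fun j => (integrable_const _).add
      (integrable_eval_of_memLp hν s)]
    simp_rw [integral_const_add_eval hν]
  rw [hmix (fun j x => (a j p + x p) * (a j q + x q) * (a j r + x r)) (fun j => by fun_prop)
    fun j => integrable_const_add_eval_mul hν (a j) p q r, hmean p, hmean q, hmean r]
  simp_rw [integral_const_add_eval_mul hν, hν_def, integral_eval_mul_eval_pi_gaussianReal]
  push_cast
  split_ifs <;>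
    simp only [mul_zero, add_zero, zero_add, sub_zero, Finset.mul_sum, ← Finset.sum_add_distrib,
      ← Finset.sum_sub_distrib] <;>
    exact Finset.sum_congr rfl fun j _ => by ring
end
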